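/- If a₁ = a₂ = 0 and a₃² + a₄² ≠ 0, then the Lie algebra g(0,0,a₃,a₄) is isomorphic as a real Lie algebra to sl(2,ℝ) × sl(2,ℝ). (This is the Lie-algebra form of the statement that the Lie group G(0,0,a₃,a₄) is locally isomorphic to the product of two copies of the universal cover of SL(2,ℝ).) -/
import Mathlib


open scoped Matrix

/-- The Lie bracket of the 6-dimensional Lie algebra `g(a₁,a₂,a₃,a₄)` of Puhle's paper,
written on `ℝ⁶` with the basis `X₁,…,X₆` corresponding to the 0-based coordinates `0,…,5`.
Here `p = 2a₁+a₃`, `q = 2a₂+a₄`, `r = a₁−a₃`, `s = a₂−a₄`,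
`α = −2(rp + sq)`, and the bracket is determined by `[X₆,X₁]=X₂`, `[X₆,X₂]=−X₁`,
`[X₆,X₃]=−X₄`, `[X₆,X₄]=X₃`, `[X₁,X₅]=−p·X₃−q·X₄`, `[X₂,X₅]=−q·X₃+p·X₄`,
`[X₃,X₅]=p·X₁+q·X₂`, `[X₄,X₅]=q·X₁−p·X₂`, `[X₁,X₃]=2r·X₅`, `[X₂,X₄]=−2r·X₅`,
`[X₁,X₄]=2s·X₅`, `[X₂,X₃]=2s·X₅`, `[X₁,X₂]=−α·X₆`, `[X₃,X₄]=α·X₆`,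
all other brackets of basis vectors being zero. -/
def gBracket (a₁ a₂ a₃ a₄ : ℝ) (x y : Fin 6 → ℝ) : Fin 6 → ℝ :=
  let p := 2 * a₁ + a₃
  let q := 2 * a₂ + a₄
  let r := a₁ - a₃
  let s := a₂ - a₄
  let α := -2 * (r * p + s * q)
  let w : Fin 6 → Fin 6 → ℝ := fun i j => x i * y j - x j * y i
  ![p * w 2 4 + q * w 3 4 + w 1 5,
    q * w 2 4 - p * w 3 4 - w 0 5,
    -(p * w 0 4) - q * w 1 4 - w 3 5,
    -(q * w 0 4) + p * w 1 4 + w 2 5,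
    2 * r * (w 0 2 - w 1 3) + 2 * s * (w 0 3 + w 1 2),
    -(α * w 0 1) + α * w 2 3]

namespace GIsoAux

lemma vec6_0 {α : Type*} (a b c d e f : α) : ![a,b,c,d,e,f] 0 = a := rfl
lemma vec6_1 {α : Type*} (a b c d e f : α) : ![a,b,c,d,e,f] 1 = b := rfl
lemma vec6_2 {α : Type*} (a b c d e f : α) : ![a,b,c,d,e,f] 2 = c := rfl
lemma vec6_3 {α : Type*} (a b c d e f : α) : ![a,b,c,d,e,f] 3 = d := rfl
lemma vec6_4 {α : Type*} (a b c d e f : α) : ![a,b,c,d,e,f] 4 = e := rfl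
lemma vec6_5 {α : Type*} (a b c d e f : α) : ![a,b,c,d,e,f] 5 = f := rfl

noncomputable def Fa (p q τ σ : ℝ) (x : Fin 6 → ℝ) : ℝ :=
  ((p-q)*x 0 + (p+q)*x 1 + σ*τ*x 2 + σ*τ*x 3)/2
noncomputable def Fb (p q τ σ : ℝ) (x : Fin 6 → ℝ) : ℝ :=
  ((p+q)*x 0 - (p-q)*x 1 - σ*τ*x 2 + σ*τ*x 3)/2
noncomputable def Fk (τ σ : ℝ) (x : Fin 6 → ℝ) : ℝ :=
  (σ*τ*x 4 + x 5)/2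

noncomputable def Fmat (p q τ σ : ℝ) (x : Fin 6 → ℝ) : Matrix (Fin 2) (Fin 2) ℝ :=
  !![Fa p q τ σ x, Fb p q τ σ x + Fk τ σ x;
     Fb p q τ σ x - Fk τ σ x, -Fa p q τ σ x]

lemma mk2_ext {a b c d a' b' c' d' : ℝ} (h1 : a = a') (h2 : b = b') (h3 : c = c')
    (h4 : d = d') : !![a, b; c, d] = !![a', b'; c', d'] := by
  subst h1; subst h2; subst h3; subst h4; rfl

lemma mk2_sub (a b c d a' b' c' d' : ℝ) :
    !![a, b; c, d] - !![a', b'; c', d'] = !![a - a', b - b'; c - c', d - d'] := by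
  ext i j; fin_cases i <;> fin_cases j <;> simp

set_option maxHeartbeats 1600000 in
lemma bracketE (p q τ σ : ℝ) (hτ2 : τ^2 = p^2 + q^2) (hσ : σ^2 = 1) (x y : Fin 6 → ℝ) :
    Fmat p q τ σ (gBracket 0 0 p q x y)
      = Fmat p q τ σ x * Fmat p q τ σ y - Fmat p q τ σ y * Fmat p q τ σ x := by
  rw [Fmat, Fmat, Fmat, Matrix.mul_fin_two, Matrix.mul_fin_two, mk2_sub]
  refine mk2_ext ?_ ?_ ?_ ?_ <;>
    simp only [Fa, Fb, Fk, gBracket, Matrix.cons_val_zero, Matrix.cons_val_one,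
      Matrix.head_cons, vec6_0, vec6_1, vec6_2, vec6_3, vec6_4, vec6_5,
      Matrix.tail_cons, Matrix.of_apply, Matrix.cons_val',
      Matrix.empty_val', Matrix.cons_val_fin_one, Matrix.head_fin_const]
  · linear_combination ((-1/2:ℝ)*σ^2*x 4*y 3 + (1/2:ℝ)*σ^2*x 4*y 2 + (1/2:ℝ)*σ^2*x 3*y 4 + (-1/2:ℝ)*σ^2*x 2*y 4) * hτ2 + ((-1/2:ℝ)*q^2*x 4*y 3 + (1/2:ℝ)*q^2*x 4*y 2 + (1/2:ℝ)*q^2*x 3*y 4 + (-1/2:ℝ)*q^2*x 2*y 4 + (-1/2:ℝ)*p^2*x 4*y 3 + (1/2:ℝ)*p^2*x 4*y 2 + (1/2:ℝ)*p^2*x 3*y 4 + (-1/2:ℝ)*p^2*x 2*y 4) * hσ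
  · linear_combination ((1/2:ℝ)*σ^2*x 4*y 3 + (1/2:ℝ)*σ^2*x 4*y 2 + (-1/2:ℝ)*σ^2*x 3*y 4 + σ^2*x 3*y 2 + (-1/2:ℝ)*σ^2*x 2*y 4 + (-1:ℝ)*σ^2*x 2*y 3) * hτ2 + ((1/2:ℝ)*q^2*x 4*y 3 + (1/2:ℝ)*q^2*x 4*y 2 + (-1/2:ℝ)*q^2*x 3*y 4 + q^2*x 3*y 2 + (-1/2:ℝ)*q^2*x 2*y 4 + (-1:ℝ)*q^2*x 2*y 3 + (1/2:ℝ)*p^2*x 4*y 3 + (1/2:ℝ)*p^2*x 4*y 2 + (-1/2:ℝ)*p^2*x 3*y 4 + p^2*x 3*y 2 + (-1/2:ℝ)*p^2*x 2*y 4 + (-1:ℝ)*p^2*x 2*y 3) * hσ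
  · linear_combination ((1/2:ℝ)*σ^2*x 4*y 3 + (1/2:ℝ)*σ^2*x 4*y 2 + (-1/2:ℝ)*σ^2*x 3*y 4 + (-1:ℝ)*σ^2*x 3*y 2 + (-1/2:ℝ)*σ^2*x 2*y 4 + σ^2*x 2*y 3) * hτ2 + ((1/2:ℝ)*q^2*x 4*y 3 + (1/2:ℝ)*q^2*x 4*y 2 + (-1/2:ℝ)*q^2*x 3*y 4 + (-1:ℝ)*q^2*x 3*y 2 + (-1/2:ℝ)*q^2*x 2*y 4 + q^2*x 2*y 3 + (1/2:ℝ)*p^2*x 4*y 3 + (1/2:ℝ)*p^2*x 4*y 2 + (-1/2:ℝ)*p^2*x 3*y 4 + (-1:ℝ)*p^2*x 3*y 2 + (-1/2:ℝ)*p^2*x 2*y 4 + p^2*x 2*y 3) * hσ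
  · linear_combination ((1/2:ℝ)*σ^2*x 4*y 3 + (-1/2:ℝ)*σ^2*x 4*y 2 + (-1/2:ℝ)*σ^2*x 3*y 4 + (1/2:ℝ)*σ^2*x 2*y 4) * hτ2 + ((1/2:ℝ)*q^2*x 4*y 3 + (-1/2:ℝ)*q^2*x 4*y 2 + (-1/2:ℝ)*q^2*x 3*y 4 + (1/2:ℝ)*q^2*x 2*y 4 + (1/2:ℝ)*p^2*x 4*y 3 + (-1/2:ℝ)*p^2*x 4*y 2 + (-1/2:ℝ)*p^2*x 3*y 4 + (1/2:ℝ)*p^2*x 2*y 4) * hσ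

noncomputable def Gmap (p q τ : ℝ) (M N : Matrix (Fin 2) (Fin 2) ℝ) : Fin 6 → ℝ :=
  let Aa := M 0 0; let Ab := (M 0 1 + M 1 0)/2; let Ak := (M 0 1 - M 1 0)/2
  let Ba := N 0 0; let Bb := (N 0 1 + N 1 0)/2; let Bk := (N 0 1 - N 1 0)/2
  ![((p+q)*(Ab+Bb) + (p-q)*(Aa+Ba))/(2*τ^2),
    (-(p-q)*(Ab+Bb) + (p+q)*(Aa+Ba))/(2*τ^2),
    ((Aa-Ba)-(Ab-Bb))/(2*τ),
    ((Aa-Ba)+(Ab-Bb))/(2*τ),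
    (Ak-Bk)/τ,
    Ak+Bk]

lemma Gmap_apply0 (p q τ : ℝ) (M N : Matrix (Fin 2) (Fin 2) ℝ) :
    Gmap p q τ M N 0
      = ((p+q)*((M 0 1 + M 1 0)/2+((N 0 1 + N 1 0)/2)) + (p-q)*(M 0 0+N 0 0))/(2*τ^2) := rfl
lemma Gmap_apply1 (p q τ : ℝ) (M N : Matrix (Fin 2) (Fin 2) ℝ) :
    Gmap p q τ M N 1
      = (-(p-q)*((M 0 1 + M 1 0)/2+((N 0 1 + N 1 0)/2)) + (p+q)*(M 0 0+N 0 0))/(2*τ^2) := rfl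
lemma Gmap_apply2 (p q τ : ℝ) (M N : Matrix (Fin 2) (Fin 2) ℝ) :
    Gmap p q τ M N 2
      = ((M 0 0-N 0 0)-((M 0 1 + M 1 0)/2-((N 0 1 + N 1 0)/2)))/(2*τ) := rfl
lemma Gmap_apply3 (p q τ : ℝ) (M N : Matrix (Fin 2) (Fin 2) ℝ) :
    Gmap p q τ M N 3
      = ((M 0 0-N 0 0)+((M 0 1 + M 1 0)/2-((N 0 1 + N 1 0)/2)))/(2*τ) := rfl
lemma Gmap_apply4 (p q τ : ℝ) (M N : Matrix (Fin 2) (Fin 2) ℝ) :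
    Gmap p q τ M N 4
      = ((M 0 1 - M 1 0)/2-((N 0 1 - N 1 0)/2))/τ := rfl
lemma Gmap_apply5 (p q τ : ℝ) (M N : Matrix (Fin 2) (Fin 2) ℝ) :
    Gmap p q τ M N 5
      = (M 0 1 - M 1 0)/2+((N 0 1 - N 1 0)/2) := rfl

set_option maxHeartbeats 3200000 in
lemma rightE (p q τ σ : ℝ) (hτ2 : τ^2 = p^2 + q^2) (hτ : τ ≠ 0) (h : p^2 + q^2 ≠ 0)
    (m00 m01 m10 n00 n01 n10 : ℝ) :
    Fmat p q τ 1 (Gmap p q τ !![m00,m01;m10,-m00] !![n00,n01;n10,-n00]) = !![m00,m01;m10,-m00]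
    ∧ Fmat p q τ (-1) (Gmap p q τ !![m00,m01;m10,-m00] !![n00,n01;n10,-n00])
        = !![n00,n01;n10,-n00] := by
  constructor <;>
  · rw [Fmat]
    refine mk2_ext ?_ ?_ ?_ ?_
    · rw [Fa, Gmap_apply0, Gmap_apply1, Gmap_apply2, Gmap_apply3]
      norm_num [Matrix.cons_val_zero, Matrix.cons_val_one, Matrix.head_cons]
      rw [hτ2]; field_simp; ring
    · rw [Fb, Fk, Gmap_apply0, Gmap_apply1, Gmap_apply2, Gmap_apply3, Gmap_apply4, Gmap_apply5]
      norm_num [Matrix.cons_val_zero, Matrix.cons_val_one, Matrix.head_cons]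
      rw [hτ2]; field_simp; ring
    · rw [Fb, Fk, Gmap_apply0, Gmap_apply1, Gmap_apply2, Gmap_apply3, Gmap_apply4, Gmap_apply5]
      norm_num [Matrix.cons_val_zero, Matrix.cons_val_one, Matrix.head_cons]
      rw [hτ2]; field_simp; ring
    · rw [Fa, Gmap_apply0, Gmap_apply1, Gmap_apply2, Gmap_apply3]
      norm_num [Matrix.cons_val_zero, Matrix.cons_val_one, Matrix.head_cons]
      rw [hτ2]; field_simp; ring
set_option maxHeartbeats 1600000 in
lemma leftE (p q τ : ℝ) (hτ2 : τ^2 = p^2 + q^2) (hτ : τ ≠ 0) (h : p^2 + q^2 ≠ 0)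
    (x : Fin 6 → ℝ) : Gmap p q τ (Fmat p q τ 1 x) (Fmat p q τ (-1) x) = x := by
  have e0 : Gmap p q τ (Fmat p q τ 1 x) (Fmat p q τ (-1) x) 0 = x 0 := by
    simp only [Gmap, Fmat, Fa, Fb, Fk, vec6_0, vec6_1, vec6_2, vec6_3, vec6_4, vec6_5,
      Matrix.cons_val_zero, Matrix.cons_val_one, Matrix.head_cons, Matrix.of_apply,
      Matrix.cons_val', Matrix.head_fin_const, Matrix.empty_val', Matrix.cons_val_fin_one]
    rw [hτ2]; field_simp; try ring
  have e1 : Gmap p q τ (Fmat p q τ 1 x) (Fmat p q τ (-1) x) 1 = x 1 := by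
    simp only [Gmap, Fmat, Fa, Fb, Fk, vec6_0, vec6_1, vec6_2, vec6_3, vec6_4, vec6_5,
      Matrix.cons_val_zero, Matrix.cons_val_one, Matrix.head_cons, Matrix.of_apply,
      Matrix.cons_val', Matrix.head_fin_const, Matrix.empty_val', Matrix.cons_val_fin_one]
    rw [hτ2]; field_simp; try ring
  have e2 : Gmap p q τ (Fmat p q τ 1 x) (Fmat p q τ (-1) x) 2 = x 2 := by
    simp only [Gmap, Fmat, Fa, Fb, Fk, vec6_0, vec6_1, vec6_2, vec6_3, vec6_4, vec6_5,
      Matrix.cons_val_zero, Matrix.cons_val_one, Matrix.head_cons, Matrix.of_apply,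
      Matrix.cons_val', Matrix.head_fin_const, Matrix.empty_val', Matrix.cons_val_fin_one]
    field_simp; try ring
  have e3 : Gmap p q τ (Fmat p q τ 1 x) (Fmat p q τ (-1) x) 3 = x 3 := by
    simp only [Gmap, Fmat, Fa, Fb, Fk, vec6_0, vec6_1, vec6_2, vec6_3, vec6_4, vec6_5,
      Matrix.cons_val_zero, Matrix.cons_val_one, Matrix.head_cons, Matrix.of_apply,
      Matrix.cons_val', Matrix.head_fin_const, Matrix.empty_val', Matrix.cons_val_fin_one]
    field_simp; try ring
  have e4 : Gmap p q τ (Fmat p q τ 1 x) (Fmat p q τ (-1) x) 4 = x 4 := by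
    simp only [Gmap, Fmat, Fa, Fb, Fk, vec6_0, vec6_1, vec6_2, vec6_3, vec6_4, vec6_5,
      Matrix.cons_val_zero, Matrix.cons_val_one, Matrix.head_cons, Matrix.of_apply,
      Matrix.cons_val', Matrix.head_fin_const, Matrix.empty_val', Matrix.cons_val_fin_one]
    field_simp; try ring
  have e5 : Gmap p q τ (Fmat p q τ 1 x) (Fmat p q τ (-1) x) 5 = x 5 := by
    simp only [Gmap, Fmat, Fa, Fb, Fk, vec6_0, vec6_1, vec6_2, vec6_3, vec6_4, vec6_5,
      Matrix.cons_val_zero, Matrix.cons_val_one, Matrix.head_cons, Matrix.of_apply,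
      Matrix.cons_val', Matrix.head_fin_const, Matrix.empty_val', Matrix.cons_val_fin_one]
    ring
  funext i; fin_cases i <;> assumption


lemma addE (p q τ σ : ℝ) (x y : Fin 6 → ℝ) :
    Fmat p q τ σ (x + y) = Fmat p q τ σ x + Fmat p q τ σ y := by
  ext i j
  fin_cases i <;> fin_cases j <;>
    simp [Fmat, Fa, Fb, Fk, Pi.add_apply] <;> ring

lemma smulE (p q τ σ c : ℝ) (x : Fin 6 → ℝ) :
    Fmat p q τ σ (c • x) = c • Fmat p q τ σ x := by
  ext i j
  fin_cases i <;> fin_cases j <;>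
    simp [Fmat, Fa, Fb, Fk, Pi.smul_apply, smul_eq_mul] <;> ring

end GIsoAux


set_option maxHeartbeats 1600000 in
open GIsoAux in
/-- If `a₁ = a₂ = 0` and `a₃² + a₄² ≠ 0`, the Lie algebra `g(0,0,a₃,a₄)` is isomorphic, as a
real Lie algebra, to `sl(2,ℝ) × sl(2,ℝ)`: there is an `ℝ`-linear equivalence onto the product
of two copies of the traceless real `2×2` matrices intertwining the brackets componentwise. -/
theorem g_iso_sl2_prod_sl2 (a₃ a₄ : ℝ) (h : a₃ ^ 2 + a₄ ^ 2 ≠ 0) :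
    ∃ e : (Fin 6 → ℝ) ≃ₗ[ℝ]
        (LieAlgebra.SpecialLinear.sl (Fin 2) ℝ × LieAlgebra.SpecialLinear.sl (Fin 2) ℝ),
      ∀ x y : Fin 6 → ℝ,
        (e (gBracket 0 0 a₃ a₄ x y)).1 = ⁅(e x).1, (e y).1⁆
          ∧ (e (gBracket 0 0 a₃ a₄ x y)).2 = ⁅(e x).2, (e y).2⁆ := by
  set τ := Real.sqrt (a₃^2 + a₄^2) with hτdef
  have hτ2 : τ^2 = a₃^2 + a₄^2 := Real.sq_sqrt (by positivity)
  have hτ : τ ≠ 0 := fun h0 => h (by rw [← hτ2, h0]; ring)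
  have hmem : ∀ σ (x : Fin 6 → ℝ), Fmat a₃ a₄ τ σ x ∈ LieAlgebra.SpecialLinear.sl (Fin 2) ℝ := by
    intro σ x
    have : Matrix.trace (Fmat a₃ a₄ τ σ x) = 0 := by
      rw [Fmat, Matrix.trace_fin_two]
      simp
    exact this
  refine ⟨{ toFun := fun x => (⟨Fmat a₃ a₄ τ 1 x, hmem 1 x⟩, ⟨Fmat a₃ a₄ τ (-1) x, hmem (-1) x⟩),
            map_add' := fun x y => ?_, map_smul' := fun c x => ?_,
            invFun := fun m => Gmap a₃ a₄ τ m.1.1 m.2.1,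
            left_inv := fun x => leftE a₃ a₄ τ hτ2 hτ h x,
            right_inv := fun m => ?_ }, fun x y => ?_⟩
  · exact Prod.ext (Subtype.ext (addE a₃ a₄ τ 1 x y)) (Subtype.ext (addE a₃ a₄ τ (-1) x y))
  · exact Prod.ext (Subtype.ext (smulE a₃ a₄ τ 1 c x)) (Subtype.ext (smulE a₃ a₄ τ (-1) c x))
  · obtain ⟨⟨M, hM⟩, ⟨N, hN⟩⟩ := m
    have hM2 : M 1 1 = -(M 0 0) := by
      have hh : M 0 0 + M 1 1 = 0 := by
        have h' : Matrix.trace M = 0 := hM; rwa [Matrix.trace_fin_two] at h'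
      linarith
    have hN2 : N 1 1 = -(N 0 0) := by
      have hh : N 0 0 + N 1 1 = 0 := by
        have h' : Matrix.trace N = 0 := hN; rwa [Matrix.trace_fin_two] at h'
      linarith
    have hMe : M = !![M 0 0, M 0 1; M 1 0, -(M 0 0)] := by
      rw [← hM2]; exact Matrix.eta_fin_two M
    have hNe : N = !![N 0 0, N 0 1; N 1 0, -(N 0 0)] := by
      rw [← hN2]; exact Matrix.eta_fin_two N
    obtain ⟨h1, h2⟩ := rightE a₃ a₄ τ 1 hτ2 hτ h (M 0 0) (M 0 1) (M 1 0) (N 0 0) (N 0 1) (N 1 0)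
    refine Prod.ext (Subtype.ext ?_) (Subtype.ext ?_)
    · show Fmat a₃ a₄ τ 1 (Gmap a₃ a₄ τ M N) = M
      rw [hMe, hNe] at *; exact h1
    · show Fmat a₃ a₄ τ (-1) (Gmap a₃ a₄ τ M N) = N
      rw [hMe, hNe] at *; exact h2
  · constructor <;> apply Subtype.ext <;> rw [LieAlgebra.SpecialLinear.sl_bracket]
    · exact bracketE a₃ a₄ τ 1 hτ2 (by norm_num) x y
    · exact bracketE a₃ a₄ τ (-1) hτ2 (by norm_num) x y
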